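/- Let A₁, A₂, …, A_k (k ≥ 2) be stable matching instances on the same n workers and n firms such that every worker has the same preference order in all of them. Then the set L' = M_{A_1} ∩ M_{A_2} ∩ … ∩ M_{A_k} is closed under the join and meet operations of each lattice L_{A_i} (these operations coincide across the instances), and if L' is nonempty it contains a worker-optimal matching (weakly preferred by every worker to every matching in L') and a worker-pessimal matching (to which every worker weakly prefers every matching in L'). -/

import Mathlib

/-! Join and meet read only the workers' preferences, so they are the same operations in every
instance, and in each single instance they preserve stability (Conway's lattice theorem); hence
the common stable matchings are closed under both. Folding the meet (resp. join) over this finite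
nonempty family yields a matching that every worker weakly prefers to (resp. finds weakly worse
than) each member. -/

/-- A stable matching instance on `n` workers and `n` firms: each worker `w` has a strict
total preference order over firms encoded by an injective rank function `wRank w`
(lower rank = more preferred), and each firm `f` has one over workers (`fRank f`). -/
structure SMInstance (n : ℕ) where
  wRank : Fin n → Fin n → Fin n
  fRank : Fin n → Fin n → Fin n
  wRank_inj : ∀ w, Function.Injective (wRank w)
  fRank_inj : ∀ f, Function.Injective (fRank f)

/-- `(w, f)` is a blocking pair of the matching `M` under instance `I`:
`M w ≠ f`, `w` strictly prefers `f` to `M w`, and `f` strictly prefers `w`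
to its `M`-partner (the worker `w'` with `M w' = f`). -/
def Blocking {n : ℕ} (I : SMInstance n) (M : Fin n → Fin n) (w f : Fin n) : Prop :=
  M w ≠ f ∧ I.wRank w f < I.wRank w (M w) ∧
    ∃ w', M w' = f ∧ I.fRank f w < I.fRank f w'

/-- A matching (bijection) is stable under `I` if it has no blocking pair. -/
def IsStable {n : ℕ} (I : SMInstance n) (M : Fin n → Fin n) : Prop :=
  Function.Bijective M ∧ ∀ w f, ¬ Blocking I M w f

/-- The join `M₁ ∨_I M₂`: each worker gets its less preferred partner. -/
def joinMap {n : ℕ} (I : SMInstance n) (M₁ M₂ : Fin n → Fin n) : Fin n → Fin n :=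
  fun w => if I.wRank w (M₁ w) < I.wRank w (M₂ w) then M₂ w else M₁ w

/-- The meet `M₁ ∧_I M₂`: each worker gets its more preferred partner. -/
def meetMap {n : ℕ} (I : SMInstance n) (M₁ M₂ : Fin n → Fin n) : Fin n → Fin n :=
  fun w => if I.wRank w (M₁ w) < I.wRank w (M₂ w) then M₁ w else M₂ w

theorem Set.Finite.exists_min_image_of_closed {α β : Type*} [Preorder β] (φ : α → β)
    (op : α → α → α) (hleft : ∀ a b, φ (op a b) ≤ φ a) (hright : ∀ a b, φ (op a b) ≤ φ b)
    {S : Set α} (hS : S.Finite) (hne : S.Nonempty) (hclosed : ∀ a ∈ S, ∀ b ∈ S, op a b ∈ S) :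
    ∃ m ∈ S, ∀ a ∈ S, φ m ≤ φ a := by
  classical
  obtain ⟨m₀, hm₀⟩ := hne
  suffices h : ∀ t : Finset α, ↑t ⊆ S → ∃ m ∈ S, ∀ a ∈ t, φ m ≤ φ a by
    obtain ⟨m, hm, hle⟩ := h hS.toFinset (by simp)
    exact ⟨m, hm, fun a ha => hle a (hS.mem_toFinset.2 ha)⟩
  intro t
  induction t using Finset.induction_on with
  | empty => exact fun _ => ⟨m₀, hm₀, by simp⟩
  | insert a t _ ih =>
    intro hsub
    obtain ⟨m, hm, hle⟩ := ih (subset_trans (by simp) hsub)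
    refine ⟨op a m, hclosed a (hsub (by simp)) m hm, ?_⟩
    simp only [Finset.mem_insert, forall_eq_or_imp]
    exact ⟨hleft a m, fun b hb => (hright a m).trans (hle b hb)⟩

section Lattice

variable {n : ℕ} {I : SMInstance n} {M M₁ M₂ : Fin n → Fin n}

theorem IsStable.fRank_lt_of_wRank_lt (hM : IsStable I M) {a b f : Fin n}
    (hpref : I.wRank a f < I.wRank a (M a)) (hb : M b = f) : I.fRank f b < I.fRank f a := by
  have hna : M a ≠ f := by rintro rfl; exact lt_irrefl _ hpref
  have hba : b ≠ a := by rintro rfl; exact hna hb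
  exact (not_lt.mp fun h => hM.2 a f ⟨hna, hpref, b, hb, h⟩).lt_of_ne ((I.fRank_inj f).ne hba)

theorem meetMap_joinMap_cases (I : SMInstance n) (M₁ M₂ : Fin n → Fin n) (w : Fin n) :
    (meetMap I M₁ M₂ w = M₁ w ∧ joinMap I M₁ M₂ w = M₂ w) ∨
      (meetMap I M₁ M₂ w = M₂ w ∧ joinMap I M₁ M₂ w = M₁ w) := by
  unfold meetMap joinMap
  split_ifs <;> simp

theorem wRank_meetMap_le_left (w : Fin n) :
    I.wRank w (meetMap I M₁ M₂ w) ≤ I.wRank w (M₁ w) := by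
  unfold meetMap
  split_ifs with h
  exacts [le_rfl, not_lt.mp h]

theorem wRank_meetMap_le_right (w : Fin n) :
    I.wRank w (meetMap I M₁ M₂ w) ≤ I.wRank w (M₂ w) := by
  unfold meetMap
  split_ifs with h
  exacts [h.le, le_rfl]

theorem wRank_le_joinMap_left (w : Fin n) :
    I.wRank w (M₁ w) ≤ I.wRank w (joinMap I M₁ M₂ w) := by
  unfold joinMap
  split_ifs with h
  exacts [h.le, le_rfl]

theorem wRank_le_joinMap_right (w : Fin n) :
    I.wRank w (M₂ w) ≤ I.wRank w (joinMap I M₁ M₂ w) := by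
  unfold joinMap
  split_ifs with h
  exacts [le_rfl, not_lt.mp h]

theorem joinMap_comm (I : SMInstance n) (M₁ M₂ : Fin n → Fin n) :
    joinMap I M₁ M₂ = joinMap I M₂ M₁ := by
  funext w
  unfold joinMap
  rcases lt_trichotomy (I.wRank w (M₁ w)) (I.wRank w (M₂ w)) with h | h | h
  · rw [if_pos h, if_neg (asymm h)]
  · simp [I.wRank_inj w h]
  · rw [if_neg (asymm h), if_pos h]

theorem joinMap_eq_of_wRank_eq {I' : SMInstance n} (h : I.wRank = I'.wRank) :
    joinMap I = joinMap I' := by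
  unfold joinMap; rw [h]

theorem meetMap_eq_of_wRank_eq {I' : SMInstance n} (h : I.wRank = I'.wRank) :
    meetMap I = meetMap I' := by
  unfold meetMap; rw [h]

/-- If `w` takes its meet partner from `M₂` and `w'` from `M₁`, these partners differ unless
`w = w'`: a common partner `f` would rank `w'` above `w` by stability of `M₁` and `w` above
`w'` by stability of `M₂`. -/
theorem eq_of_meetMap_eq_right_of_meetMap_eq_left (h₁ : IsStable I M₁) (h₂ : IsStable I M₂)
    {w w' : Fin n} (hw : meetMap I M₁ M₂ w = M₂ w) (hw' : meetMap I M₁ M₂ w' = M₁ w')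
    (he : M₂ w = M₁ w') : w = w' := by
  by_contra hne
  have hM₁ : M₁ w ≠ M₁ w' := h₁.1.1.ne hne
  have hM₂ : M₂ w' ≠ M₂ w := h₂.1.1.ne (Ne.symm hne)
  have hpref : I.wRank w (M₁ w') < I.wRank w (M₁ w) := by
    refine lt_of_le_of_ne ?_ ((I.wRank_inj w).ne hM₁.symm)
    rw [← he, ← hw]; exact wRank_meetMap_le_left w
  have hpref' : I.wRank w' (M₂ w) < I.wRank w' (M₂ w') := by
    refine lt_of_le_of_ne ?_ ((I.wRank_inj w').ne hM₂.symm)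
    rw [he, ← hw']; exact wRank_meetMap_le_right w'
  exact asymm (h₁.fRank_lt_of_wRank_lt hpref rfl)
    (he ▸ h₂.fRank_lt_of_wRank_lt hpref' rfl)

theorem meetMap_injective (h₁ : IsStable I M₁) (h₂ : IsStable I M₂) :
    Function.Injective (meetMap I M₁ M₂) := by
  intro w w' he
  rcases meetMap_joinMap_cases I M₁ M₂ w with ⟨hw, -⟩ | ⟨hw, -⟩ <;>
    rcases meetMap_joinMap_cases I M₁ M₂ w' with ⟨hw', -⟩ | ⟨hw', -⟩
  · exact h₁.1.1 (hw ▸ hw' ▸ he)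
  · exact (eq_of_meetMap_eq_right_of_meetMap_eq_left h₁ h₂ hw' hw (hw' ▸ hw ▸ he.symm)).symm
  · exact eq_of_meetMap_eq_right_of_meetMap_eq_left h₁ h₂ hw hw' (hw ▸ hw' ▸ he)
  · exact h₂.1.1 (hw ▸ hw' ▸ he)

theorem meetMap_isStable (h₁ : IsStable I M₁) (h₂ : IsStable I M₂) :
    IsStable I (meetMap I M₁ M₂) := by
  refine ⟨Finite.injective_iff_bijective.mp (meetMap_injective h₁ h₂), ?_⟩
  rintro w f ⟨hne, hpref, w', hw', hfr⟩
  have hpref₁ := hpref.trans_le (wRank_meetMap_le_left w)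
  have hpref₂ := hpref.trans_le (wRank_meetMap_le_right w)
  rcases meetMap_joinMap_cases I M₁ M₂ w' with ⟨hm, -⟩ | ⟨hm, -⟩
  · exact h₁.2 w f ⟨by rintro rfl; exact lt_irrefl _ hpref₁, hpref₁, w', hm ▸ hw', hfr⟩
  · exact h₂.2 w f ⟨by rintro rfl; exact lt_irrefl _ hpref₂, hpref₂, w', hm ▸ hw', hfr⟩

/-- If neither `M₁⁻¹ f` nor `M₂⁻¹ f` gets `f` in the join, both get `f` in the meet. -/
theorem joinMap_bijective (h₁ : IsStable I M₁) (h₂ : IsStable I M₂) :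
    Function.Bijective (joinMap I M₁ M₂) := by
  refine Finite.surjective_iff_bijective.mp fun f => ?_
  obtain ⟨w₁, hw₁⟩ := h₁.1.2 f
  obtain ⟨w₂, hw₂⟩ := h₂.1.2 f
  rcases meetMap_joinMap_cases I M₁ M₂ w₁ with ⟨hm₁, hj₁⟩ | ⟨-, hj₁⟩
  · rcases meetMap_joinMap_cases I M₁ M₂ w₂ with ⟨-, hj₂⟩ | ⟨hm₂, hj₂⟩
    · exact ⟨w₂, hj₂.trans hw₂⟩
    · have hw : w₁ = w₂ := meetMap_injective h₁ h₂ (by rw [hm₁, hm₂, hw₁, hw₂])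
      exact ⟨w₁, by rw [hj₁, hw, hw₂]⟩
  · exact ⟨w₁, hj₁.trans hw₁⟩

/-- In the join every firm gets the better, for the firm, of its partners in `M₁` and `M₂`. -/
theorem fRank_le_of_joinMap_eq (h₁ : IsStable I M₁) (h₂ : IsStable I M₂) {w u f : Fin n}
    (hw : joinMap I M₁ M₂ w = f) (hu : M₂ u = f) : I.fRank f w ≤ I.fRank f u := by
  rcases meetMap_joinMap_cases I M₁ M₂ w with ⟨-, hj⟩ | ⟨-, hj⟩
  · rw [h₂.1.1 ((hj.symm.trans hw).trans hu.symm)]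
  · have hw₁ : M₁ w = f := hj.symm.trans hw
    by_contra! hlt
    have huw : u ≠ w := by rintro rfl; exact lt_irrefl _ hlt
    have hM₁u : M₁ u ≠ f := fun e => huw (h₁.1.1 (e.trans hw₁.symm))
    -- `u` cannot prefer `f` to `M₁ u`, or `(u, f)` would block `M₁`
    have hpref : I.wRank u (M₁ u) < I.wRank u f :=
      (not_lt.mp fun h => asymm hlt (h₁.fRank_lt_of_wRank_lt h hw₁)).lt_of_ne
        ((I.wRank_inj u).ne hM₁u)
    have hju : joinMap I M₁ M₂ u = f := by
      rw [← hu] at hpref ⊢; exact if_pos hpref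
    exact huw ((joinMap_bijective h₁ h₂).1 (hju.trans hw.symm))

theorem joinMap_isStable (h₁ : IsStable I M₁) (h₂ : IsStable I M₂) :
    IsStable I (joinMap I M₁ M₂) := by
  refine ⟨joinMap_bijective h₁ h₂, ?_⟩
  rintro w f ⟨hne, hpref, w', hw', hfr⟩
  obtain ⟨u₁, hu₁⟩ := h₁.1.2 f
  obtain ⟨u₂, hu₂⟩ := h₂.1.2 f
  rcases meetMap_joinMap_cases I M₁ M₂ w with ⟨-, hj⟩ | ⟨-, hj⟩
  · exact h₂.2 w f ⟨hj ▸ hne, hj ▸ hpref, u₂, hu₂,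
      hfr.trans_le (fRank_le_of_joinMap_eq h₁ h₂ hw' hu₂)⟩
  · exact h₁.2 w f ⟨hj ▸ hne, hj ▸ hpref, u₁, hu₁,
      hfr.trans_le (fRank_le_of_joinMap_eq h₂ h₁ (joinMap_comm I M₁ M₂ ▸ hw') hu₁)⟩

end Lattice

/-- for k ≥ 2 instances with identical worker preferences,
the intersection of their sets of stable matchings is closed under the join and
meet of each lattice (and these operations coincide across instances); and if the
intersection is nonempty it has worker-optimal and worker-pessimal matchings. -/
theorem stmt6 {n k : ℕ} (hk : 2 ≤ k) (A : Fin k → SMInstance n)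
    (hW : ∀ i j : Fin k, (A i).wRank = (A j).wRank) :
    (∀ M₁ M₂ : Fin n → Fin n,
      (∀ i, IsStable (A i) M₁) → (∀ i, IsStable (A i) M₂) →
        (∀ i j, joinMap (A i) M₁ M₂ = joinMap (A j) M₁ M₂ ∧
                meetMap (A i) M₁ M₂ = meetMap (A j) M₁ M₂) ∧
        (∀ i j, IsStable (A i) (joinMap (A j) M₁ M₂) ∧
                IsStable (A i) (meetMap (A j) M₁ M₂))) ∧
    ((∃ M, ∀ i, IsStable (A i) M) →
      (∃ Mtop, (∀ i, IsStable (A i) Mtop) ∧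
        ∀ M, (∀ i, IsStable (A i) M) → ∀ (w : Fin n),
          (A ⟨0, by omega⟩).wRank w (Mtop w) ≤ (A ⟨0, by omega⟩).wRank w (M w)) ∧
      (∃ Mbot, (∀ i, IsStable (A i) Mbot) ∧
        ∀ M, (∀ i, IsStable (A i) M) → ∀ (w : Fin n),
          (A ⟨0, by omega⟩).wRank w (M w) ≤ (A ⟨0, by omega⟩).wRank w (Mbot w))) := by
  have join_closed : ∀ j M₁ M₂, (∀ i, IsStable (A i) M₁) → (∀ i, IsStable (A i) M₂) →
      ∀ i, IsStable (A i) (joinMap (A j) M₁ M₂) := fun j _ _ h₁ h₂ i =>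
    joinMap_eq_of_wRank_eq (hW i j) ▸ joinMap_isStable (h₁ i) (h₂ i)
  have meet_closed : ∀ j M₁ M₂, (∀ i, IsStable (A i) M₁) → (∀ i, IsStable (A i) M₂) →
      ∀ i, IsStable (A i) (meetMap (A j) M₁ M₂) := fun j _ _ h₁ h₂ i =>
    meetMap_eq_of_wRank_eq (hW i j) ▸ meetMap_isStable (h₁ i) (h₂ i)
  refine ⟨fun M₁ M₂ h₁ h₂ => ⟨fun i j => ?_, fun i j => ⟨join_closed j _ _ h₁ h₂ i,
    meet_closed j _ _ h₁ h₂ i⟩⟩, fun hne => ⟨?_, ?_⟩⟩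
  · rw [joinMap_eq_of_wRank_eq (hW i j), meetMap_eq_of_wRank_eq (hW i j)]
    exact ⟨rfl, rfl⟩
  · exact (Set.toFinite {M | ∀ i, IsStable (A i) M}).exists_min_image_of_closed
      (fun M w => (A ⟨0, by omega⟩).wRank w (M w)) (meetMap (A ⟨0, by omega⟩))
      (fun _ _ => wRank_meetMap_le_left) (fun _ _ => wRank_meetMap_le_right) hne
      fun M₁ h₁ M₂ h₂ => meet_closed _ M₁ M₂ h₁ h₂
  · exact (Set.toFinite {M | ∀ i, IsStable (A i) M}).exists_min_image_of_closed
      (fun M => OrderDual.toDual fun w => (A ⟨0, by omega⟩).wRank w (M w))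
      (joinMap (A ⟨0, by omega⟩))
      (fun _ _ => wRank_le_joinMap_left) (fun _ _ => wRank_le_joinMap_right) hne
      fun M₁ h₁ M₂ h₂ => join_closed _ M₁ M₂ h₁ h₂
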